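/- Let d ≥ 1 and let a : Fin d → ℕ be a partition of length d (a nonincreasing sequence of natural numbers) with |a| > 0, and set μ(d) = lcm(1,2,…,d). Then there exists a finite set σ(a) of partitions of length d such that every partition b : Fin d → ℕ lying in C(a) (i.e. satisfying |a|·(b 0 + … + b n) ≤ |b|·(a 0 + … + a n) for every n < d) can be written as b = c + Σ_L m_L · v(L, μ(d)·a), where c ∈ σ(a), the sum runs over all compositions L of d, and each m_L is a nonnegative integer. -/

import Mathlib

open Finset

/-- `vSeq L a` is the sequence `v(L,a)` of length `d`: it is constant on each block of the
composition `L` of `d`, and its value on block `i` is the average of `a` over that block,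
i.e. (sum of `a` over block `i`) divided by the length `lᵢ` of block `i`. -/
noncomputable def vSeq {d : ℕ} (L : Composition d) (a : Fin d → ℚ) : Fin d → ℚ :=
  fun i => (∑ j : Fin d, if L.index j = L.index i then a j else 0) / (L.blocksFun (L.index i) : ℚ)

/-- `μ(d) = lcm(1, 2, …, d)`. -/
def lcmUpTo (d : ℕ) : ℕ := (Finset.Icc 1 d).lcm id

/-!
Put `y = (|b| / |a|) • a`. The cone condition says that `b` is majorized by `y`: the partial sums
of `b` are bounded by those of `y`, with equal totals. The antitone sequences majorized by `y` form
a polytope whose points are convex combinations of the block averages `v(L, y)`. Indeed, for `x` in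
the polytope let `L` be the composition whose boundaries are the points where the partial sums of
`x` and `y` agree; then `v(L, y)` satisfies with equality every constraint that `x` satisfies with
equality, so pushing `x` away from `v(L, y)` reaches a point of the polytope with strictly more
tight constraints, and induction applies.

Hence `b = ∑_L r_L • v(L, μ(d) a)` with `r_L ≥ 0`. Every block length divides `μ(d)`, so the
`v(L, μ(d) a)` are integral, and splitting each `r_L` into its integer and fractional parts writes
`b = c + ∑_L ⌊r_L⌋ • v(L, μ(d) a)` with `c` antitone, integral and bounded by `∑_L v(L, μ(d) a)`:
there are finitely many such `c`.
-/

section Polyhedron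

variable {𝕜 E ι : Type*} [Field 𝕜] [LinearOrder 𝕜] [IsStrictOrderedRing 𝕜]
  [AddCommGroup E] [Module 𝕜 E]

theorem mem_convexHull_of_exists_tight [Finite ι] (φ : ι → Module.Dual 𝕜 E) (c : ι → 𝕜)
    {V : Set E} (hrec : ∀ v, (∀ j, φ j v ≤ 0) → v = 0)
    (hV : ∀ x, (∀ j, φ j x ≤ c j) → ∃ w ∈ V, ∀ j, φ j x = c j → φ j w = c j)
    {x : E} (hx : ∀ j, φ j x ≤ c j) : x ∈ convexHull 𝕜 V := by
  classical
  have := Fintype.ofFinite ι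
  induction hn : #{j | φ j x < c j} using Nat.strong_induction_on generalizing x with
  | _ n ih =>
  obtain ⟨w, hwV, hw⟩ := hV x hx
  by_cases hxw : x = w
  · exact subset_convexHull 𝕜 V (hxw ▸ hwV)
  have hloose : ∀ j, 0 < φ j (x - w) → φ j x < c j := fun j hj =>
    (hx j).lt_of_ne fun h => hj.ne' (by rw [map_sub, h, hw j h, sub_self])
  obtain ⟨j₀, hj₀⟩ : ∃ j, 0 < φ j (x - w) := by
    by_contra! h
    exact hxw (sub_eq_zero.1 (hrec _ h))
  -- move from `x` away from `w` until the first constraint becomes tight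
  obtain ⟨j₁, hj₁, hmin⟩ := exists_min_image {j | 0 < φ j (x - w)}
    (fun j => (c j - φ j x) / φ j (x - w)) ⟨j₀, by simpa using hj₀⟩
  simp only [mem_filter, mem_univ, true_and] at hj₁ hmin
  set s := (c j₁ - φ j₁ x) / φ j₁ (x - w)
  have hs : 0 < s := div_pos (sub_pos.2 (hloose j₁ hj₁)) hj₁
  set x' := x + s • (x - w)
  have hφx' : ∀ j, φ j x' = φ j x + s * φ j (x - w) := fun j => by
    simp only [x', map_add, map_smul, smul_eq_mul]
  have hx' : ∀ j, φ j x' ≤ c j := by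
    intro j
    rw [hφx']
    rcases le_or_gt (φ j (x - w)) 0 with h | h
    · nlinarith [hx j]
    · have := hmin j h
      rw [le_div_iff₀ h] at this
      linarith
  have hlt : #{j | φ j x' < c j} < #{j | φ j x < c j} := by
    refine card_lt_card ⟨fun j => ?_, fun hsub => ?_⟩
    · simp only [mem_filter, mem_univ, true_and]
      intro hj
      refine (hx j).lt_of_ne fun h => hj.ne ?_
      rw [hφx', map_sub, h, hw j h]
      ring
    · have : φ j₁ x' = c j₁ := by
        rw [hφx', div_mul_cancel₀ _ hj₁.ne']
        ring
      have hlt' : φ j₁ x' < c j₁ := by simpa using hsub (by simpa using hloose j₁ hj₁)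
      exact hlt'.ne this
  have hx'V := ih _ (hn ▸ hlt) hx' rfl
  have hmem := (convex_convexHull 𝕜 V).add_smul_sub_mem hx'V (subset_convexHull 𝕜 V hwV)
    (t := s / (1 + s)) ⟨by positivity, (div_le_one (by positivity)).2 (by linarith)⟩
  convert hmem using 1
  simp only [x']
  have : (1 + s) ≠ 0 := by positivity
  match_scalars <;> field_simp <;> ring

theorem exists_nonneg_sum_smul_eq_of_mem_convexHull_range [Fintype ι] {v : ι → E} {x : E}
    (hx : x ∈ convexHull 𝕜 (Set.range v)) : ∃ t : ι → 𝕜, 0 ≤ t ∧ ∑ i, t i • v i = x := by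
  classical
  rw [convexHull_range_eq_exists_affineCombination] at hx
  obtain ⟨s, w, hw₀, hw₁, rfl⟩ := hx
  refine ⟨fun i => if i ∈ s then w i else 0, fun i => ?_, ?_⟩
  · dsimp only [Pi.zero_apply]
    split_ifs with h
    exacts [hw₀ i h, le_rfl]
  · rw [s.affineCombination_eq_linear_combination _ _ hw₁]
    simp [ite_smul, sum_ite_mem]

end Polyhedron

namespace Composition

variable {d : ℕ} (L : Composition d)

theorem lt_sizeUpTo_iff_index_lt (j : Fin d) (m : ℕ) :
    (j : ℕ) < L.sizeUpTo m ↔ (L.index j : ℕ) < m := by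
  constructor
  · intro h
    by_contra! hm
    exact (L.sizeUpTo_index_le j).not_gt ((L.monotone_sizeUpTo hm).trans_lt' h)
  · intro h
    exact (L.lt_sizeUpTo_index_succ j).trans_le (L.monotone_sizeUpTo h)

theorem monotone_index : Monotone L.index := by
  intro i j hij
  by_contra! h
  have := (L.lt_sizeUpTo_iff_index_lt j (L.index i)).2 h
  exact (L.sizeUpTo_index_le i).not_gt (this.trans_le' hij)

theorem mem_boundaries_iff {p : Fin (d + 1)} :
    p ∈ L.boundaries ↔ ∃ m, L.sizeUpTo m = p ∧ m ≤ L.length := by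
  simp only [boundaries, mem_map, mem_univ, true_and]
  constructor
  · rintro ⟨m, rfl⟩
    exact ⟨m, rfl, Nat.lt_succ_iff.1 m.2⟩
  · rintro ⟨m, hm, hml⟩
    exact ⟨⟨m, Nat.lt_succ_of_le hml⟩, Fin.ext hm⟩

theorem castSucc_mem_boundaries_of_index_ne {i j : Fin d} (hij : i ⋖ j)
    (h : L.index i ≠ L.index j) : j.castSucc ∈ L.boundaries := by
  have hlt : (L.index i : ℕ) < L.index j := (L.monotone_index hij.le).lt_of_ne h
  have hi := (L.lt_sizeUpTo_iff_index_lt i _).2 hlt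
  have hj := L.sizeUpTo_index_le j
  have : (i : ℕ) + 1 = j := by simpa [Nat.covBy_iff_add_one_eq] using hij
  exact L.mem_boundaries_iff.2 ⟨L.index j, by simp; omega, (L.index j).2.le⟩

theorem card_filter_index_eq (k : Fin L.length) : #{j | L.index j = k} = L.blocksFun k := by
  have : ({j | L.index j = k} : Finset (Fin d)) = univ.map (L.embedding k).toEmbedding := by
    ext j
    rw [mem_filter, eq_comm, ← L.mem_range_embedding_iff']
    simp
  simp [this]

theorem exists_boundaries_eq {s : Finset (Fin (d + 1))} (h₀ : 0 ∈ s) (hlast : Fin.last d ∈ s) :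
    ∃ L : Composition d, L.boundaries = s :=
  ⟨(CompositionAsSet.mk s h₀ hlast).toComposition, CompositionAsSet.toComposition_boundaries _⟩

end Composition

theorem Finset.sum_div_card_le_sum_div_card {α 𝕜 : Type*} [Field 𝕜] [LinearOrder 𝕜]
    [IsStrictOrderedRing 𝕜] {s t : Finset α} {f : α → 𝕜} (hs : s.Nonempty) (ht : t.Nonempty)
    (h : ∀ i ∈ s, ∀ j ∈ t, f j ≤ f i) : (∑ j ∈ t, f j) / #t ≤ (∑ i ∈ s, f i) / #s := by
  rw [div_le_div_iff₀ (by simpa using ht) (by simpa using hs)]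
  have key : ∑ i ∈ s, ∑ j ∈ t, f j ≤ ∑ i ∈ s, ∑ j ∈ t, f i :=
    sum_le_sum fun i hi => sum_le_sum fun j hj => h i hi j hj
  simpa [sum_const, nsmul_eq_mul, ← sum_mul, mul_comm] using key

section PartialSum

variable {R : Type*} [CommSemiring R] {d : ℕ}

def partialSum (p : Fin (d + 1)) : (Fin d → R) →ₗ[R] R :=
  ∑ i with i.castSucc < p, LinearMap.proj i

theorem partialSum_apply (p : Fin (d + 1)) (x : Fin d → R) :
    partialSum p x = ∑ i with i.castSucc < p, x i := by
  simp [partialSum]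

@[simp] theorem partialSum_zero (x : Fin d → R) : partialSum 0 x = 0 := by
  simp [partialSum_apply]

@[simp] theorem partialSum_last (x : Fin d → R) : partialSum (Fin.last d) x = ∑ i, x i := by
  simp [partialSum_apply, Fin.castSucc_lt_last]

theorem partialSum_succ (i : Fin d) (x : Fin d → R) :
    partialSum i.succ x = ∑ j ∈ Iic i, x j := by
  rw [partialSum_apply]
  congr 1
  ext j
  simp

theorem partialSum_succ_eq_add (i : Fin d) (x : Fin d → R) :
    partialSum i.succ x = partialSum i.castSucc x + x i := by
  have : ({j | j.castSucc < i.castSucc} : Finset (Fin d)) = Iio i := by ext j; simp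
  rw [partialSum_succ, partialSum_apply, this, ← Iio_insert, sum_insert (by simp), add_comm]

end PartialSum

section BlockAverage

variable {d : ℕ} (L : Composition d)

theorem vSeq_apply (y : Fin d → ℚ) (i : Fin d) :
    vSeq L y i = (∑ j with L.index j = L.index i, y j) / L.blocksFun (L.index i) := by
  rw [sum_filter]; rfl

theorem vSeq_smul (c : ℚ) (y : Fin d → ℚ) : vSeq L (c • y) = c • vSeq L y := by
  ext i
  simp [vSeq_apply, ← mul_sum, mul_div_assoc]

theorem sum_vSeq_filter_index (y : Fin d → ℚ) (k : Fin L.length) :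
    ∑ j with L.index j = k, vSeq L y j = ∑ j with L.index j = k, y j := by
  have hk : (L.blocksFun k : ℚ) ≠ 0 := by have := L.one_le_blocksFun k; positivity
  rw [sum_congr rfl fun j hj => by rw [vSeq_apply, (mem_filter.1 hj).2], sum_const,
    L.card_filter_index_eq, nsmul_eq_mul, mul_div_cancel₀ _ hk]

theorem partialSum_vSeq_of_mem_boundaries (y : Fin d → ℚ) {p : Fin (d + 1)}
    (hp : p ∈ L.boundaries) : partialSum p (vSeq L y) = partialSum p y := by
  obtain ⟨m, hm, -⟩ := L.mem_boundaries_iff.1 hp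
  have hsplit : ∀ x : Fin d → ℚ,
      partialSum p x =
        ∑ k ∈ univ.filter (fun k : Fin L.length => k < m), ∑ j with L.index j = k, x j := by
    intro x
    rw [sum_fiberwise_eq_sum_filter, partialSum_apply]
    congr 1
    ext j
    simp [Fin.lt_def, ← hm, L.lt_sizeUpTo_iff_index_lt]
  simp only [hsplit, sum_vSeq_filter_index]

theorem vSeq_apply_of_mem_boundaries (y : Fin d → ℚ) {i : Fin d}
    (hi : i.castSucc ∈ L.boundaries) (hi' : i.succ ∈ L.boundaries) : vSeq L y i = y i := by
  have h := partialSum_succ_eq_add i (vSeq L y)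
  rw [partialSum_vSeq_of_mem_boundaries L y hi,
    partialSum_vSeq_of_mem_boundaries L y hi',
    partialSum_succ_eq_add] at h
  linarith

theorem antitone_vSeq {y : Fin d → ℚ} (hy : Antitone y) : Antitone (vSeq L y) := by
  intro i j hij
  rcases (L.monotone_index hij).lt_or_eq with hlt | heq
  · rw [vSeq_apply, vSeq_apply, ← L.card_filter_index_eq, ← L.card_filter_index_eq]
    refine sum_div_card_le_sum_div_card ⟨i, by simp⟩ ⟨j, by simp⟩ fun u hu v hv => hy ?_
    simp only [mem_filter, mem_univ, true_and] at hu hv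
    exact (L.monotone_index.reflect_lt (hu ▸ hv ▸ hlt)).le
  · rw [vSeq_apply, vSeq_apply, heq]

end BlockAverage

section Majorization

variable {d : ℕ}

theorem eq_zero_of_antitone_of_partialSum_nonpos {v : Fin d → ℚ} (hv : Antitone v)
    (hps : ∀ p, partialSum p v ≤ 0) (hsum : 0 ≤ ∑ i, v i) : v = 0 := by
  cases d with
  | zero => exact funext fun i => i.elim0
  | succ n =>
    have h₀ := hps (Fin.succ 0)
    rw [partialSum_succ_eq_add, Fin.castSucc_zero, partialSum_zero, zero_add] at h₀
    have hneg : ∀ i ∈ univ, v i ≤ 0 := fun i _ => (hv (Fin.zero_le i)).trans h₀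
    funext i
    exact (sum_eq_zero_iff_of_nonpos hneg).1 (hsum.antisymm' (sum_nonpos hneg)) i (mem_univ i)

/-- Indices of the inequalities `majorizationForm j x ≤ majorizationBound y j` cutting out the
antitone `x` majorized by `y`: the partial sums, the reversed total sum (for equality of totals),
and the consecutive pairs `i ⋖ j`. -/
abbrev MajorizationIndex (d : ℕ) := Fin (d + 1) ⊕ Unit ⊕ {e : Fin d × Fin d // e.1 ⋖ e.2}

def majorizationForm : MajorizationIndex d → Module.Dual ℚ (Fin d → ℚ)
  | .inl p => partialSum p
  | .inr (.inl _) => -partialSum (Fin.last d)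
  | .inr (.inr e) => (LinearMap.proj e.1.2 : Module.Dual ℚ (Fin d → ℚ)) - LinearMap.proj e.1.1

def majorizationBound (y : Fin d → ℚ) : MajorizationIndex d → ℚ
  | .inl p => partialSum p y
  | .inr (.inl _) => -partialSum (Fin.last d) y
  | .inr (.inr _) => 0

theorem forall_majorizationForm_le_iff {x y : Fin d → ℚ} :
    (∀ j, majorizationForm j x ≤ majorizationBound y j) ↔
      Antitone x ∧ (∀ p, partialSum p x ≤ partialSum p y) ∧ ∑ i, y i ≤ ∑ i, x i := by
  simp only [Sum.forall, Subtype.forall, Prod.forall, majorizationForm, majorizationBound,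
    LinearMap.sub_apply, LinearMap.proj_apply, LinearMap.neg_apply, partialSum_last,
    neg_le_neg_iff, sub_nonpos, antitone_iff_forall_covBy, forall_const]
  tauto

theorem vSeq_apply_eq_of_covBy {L : Composition d} {x y : Fin d → ℚ} (hy : Antitone y)
    (hxy : ∀ p, partialSum p x ≤ partialSum p y)
    (hL : ∀ p, p ∈ L.boundaries ↔ partialSum p x = partialSum p y) {i j : Fin d} (hij : i ⋖ j)
    (hx : x i = x j) : vSeq L y i = vSeq L y j := by
  by_cases hidx : L.index i = L.index j
  · rw [vSeq_apply, vSeq_apply, hidx]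
  have hsucc : i.succ = j.castSucc := by
    ext
    simpa [Nat.covBy_iff_add_one_eq] using hij
  have hj := (hL _).1 (L.castSucc_mem_boundaries_of_index_ne hij hidx)
  have hxi := partialSum_succ_eq_add i x
  have hyi := partialSum_succ_eq_add i y
  have hxj := partialSum_succ_eq_add j x
  have hyj := partialSum_succ_eq_add j y
  rw [hsucc] at hxi hyi
  -- `y i ≤ x i = x j ≤ y j ≤ y i`, so the partial sums also agree around `i` and `j`
  have := hxy i.castSucc
  have := hxy j.succ
  have := hy hij.le
  have hi' := (hL i.castSucc).2 (by linarith)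
  have hj' := (hL j.succ).2 (by linarith)
  rw [vSeq_apply_of_mem_boundaries L y hi' (hsucc ▸ (hL _).2 hj),
    vSeq_apply_of_mem_boundaries L y ((hL _).2 hj) hj']
  linarith

theorem mem_convexHull_range_vSeq {x y : Fin d → ℚ} (hy : Antitone y) (hx : Antitone x)
    (hxy : ∀ p, partialSum p x ≤ partialSum p y) (hsum : ∑ i, x i = ∑ i, y i) :
    x ∈ convexHull ℚ (Set.range fun L : Composition d => vSeq L y) := by
  classical
  refine mem_convexHull_of_exists_tight majorizationForm (majorizationBound y) (fun v hv => ?_)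
    (fun x hx => ?_) (forall_majorizationForm_le_iff.2 ⟨hx, hxy, hsum.ge⟩)
  · have hv0 : ∀ j, majorizationForm j v ≤ majorizationBound 0 j := by
      rintro (_ | _ | _) <;> simpa [majorizationBound] using hv _
    obtain ⟨hva, hvps, hvsum⟩ := forall_majorizationForm_le_iff.1 hv0
    exact eq_zero_of_antitone_of_partialSum_nonpos hva (by simpa using hvps)
      (by simpa using hvsum)
  obtain ⟨-, hxy, hsum⟩ := forall_majorizationForm_le_iff.1 hx
  obtain ⟨L, hL⟩ := Composition.exists_boundaries_eq
    (s := {p | partialSum p x = partialSum p y}) (by simp)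
    (by simpa using le_antisymm (by simpa using hxy (Fin.last d)) hsum)
  replace hL : ∀ p, p ∈ L.boundaries ↔ partialSum p x = partialSum p y := by simp [hL]
  refine ⟨vSeq L y, ⟨L, rfl⟩, ?_⟩
  rintro (p | _ | ⟨⟨i, j⟩, hij⟩) h <;> simp only [majorizationForm, majorizationBound] at h ⊢
  · exact partialSum_vSeq_of_mem_boundaries L y ((hL p).2 h)
  · rw [LinearMap.neg_apply,
      partialSum_vSeq_of_mem_boundaries L y L.toCompositionAsSet.getLast_mem]
  · simp only [LinearMap.sub_apply, LinearMap.proj_apply, sub_eq_zero] at h ⊢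
    exact (vSeq_apply_eq_of_covBy hy hxy hL hij h.symm).symm

end Majorization

theorem exists_antitone_le_sum_add_sum_nat_smul {ι κ K : Type*} [Preorder ι] [Fintype κ]
    [Field K] [LinearOrder K] [IsStrictOrderedRing K] [FloorSemiring K]
    {u : κ → ι → ℕ} (hu : ∀ k, Antitone (u k)) {b : ι → ℕ} {r : κ → K} (hr : 0 ≤ r)
    (hb : ∑ k, r k • (fun i => (u k i : K)) = fun i => (b i : K)) :
    ∃ c : ι → ℕ, Antitone c ∧ c ≤ ∑ k, u k ∧ ∃ m : κ → ℕ,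
      (fun i => (b i : K)) = (fun i => (c i : K)) + ∑ k, (m k : K) • fun i => (u k i : K) := by
  set m : κ → ℕ := fun k => ⌊r k⌋₊
  have hm0 : ∀ k, 0 ≤ r k - m k := fun k => sub_nonneg.2 (Nat.floor_le (hr k))
  have hm1 : ∀ k, r k - m k ≤ 1 := fun k => by linarith [Nat.lt_floor_add_one (r k)]
  set n : ι → ℕ := fun i => ∑ k, m k * u k i
  have hb_eq : ∀ i, (b i : K) = ∑ k, (r k - m k) * u k i + n i := fun i => by
    simp [n, ← congr_fun hb i, sub_mul, Finset.sum_apply]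
  have hrem0 : ∀ i, 0 ≤ ∑ k, (r k - m k) * u k i := fun i =>
    sum_nonneg fun k _ => mul_nonneg (hm0 k) (Nat.cast_nonneg _)
  have hn : n ≤ b := fun i => by exact_mod_cast (hb_eq i ▸ le_add_of_nonneg_left (hrem0 i))
  have hc : ∀ i, ((b - n) i : K) = ∑ k, (r k - m k) * u k i := fun i => by
    rw [Pi.sub_apply, Nat.cast_sub (hn i), hb_eq i, add_sub_cancel_right]
  refine ⟨b - n, fun i j hij => ?_, fun i => ?_, m, funext fun i => ?_⟩
  · rw [← Nat.cast_le (α := K), hc, hc]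
    exact sum_le_sum fun k _ => mul_le_mul_of_nonneg_left (by exact_mod_cast hu k hij) (hm0 k)
  · rw [← Nat.cast_le (α := K), hc, Finset.sum_apply, Nat.cast_sum]
    exact sum_le_sum fun k _ => mul_le_of_le_one_left (Nat.cast_nonneg _) (hm1 k)
  · rw [Pi.add_apply, hc, hb_eq i]
    simp [n, Finset.sum_apply]

theorem dvd_lcmUpTo {d k : ℕ} (hk : 1 ≤ k) (hkd : k ≤ d) : k ∣ lcmUpTo d :=
  dvd_lcm (f := id) (mem_Icc.2 ⟨hk, hkd⟩)

theorem lcmUpTo_pos (d : ℕ) : 0 < lcmUpTo d :=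
  Nat.pos_of_ne_zero <| lcm_ne_zero_iff.2 fun _ hk => Nat.one_le_iff_ne_zero.1 (mem_Icc.1 hk).1

theorem exists_antitone_natCast_eq_vSeq {d : ℕ} (L : Composition d) {a : Fin d → ℕ}
    (ha : Antitone a) : ∃ u : Fin d → ℕ, Antitone u ∧
      (fun i => (u i : ℚ)) = vSeq L (fun j => (lcmUpTo d * a j : ℚ)) := by
  -- `μ(d) / l` is an integer for every block length `l ≤ d`
  set u : Fin d → ℕ := fun i =>
    lcmUpTo d / L.blocksFun (L.index i) * ∑ j with L.index j = L.index i, a j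
  have hu : (fun i => (u i : ℚ)) = vSeq L (fun j => (lcmUpTo d * a j : ℚ)) := by
    ext i
    have hl := L.one_le_blocksFun (L.index i)
    have hl' : (L.blocksFun (L.index i) : ℚ) ≠ 0 := by positivity
    rw [vSeq_apply, ← mul_sum]
    simp only [u, Nat.cast_mul, Nat.cast_div (dvd_lcmUpTo hl (L.blocksFun_le _)) hl',
      Nat.cast_sum]
    ring
  refine ⟨u, fun i j hij => ?_, hu⟩
  have := antitone_vSeq L (y := fun j => (lcmUpTo d * a j : ℚ))
    (fun i j hij => by dsimp only; gcongr; exact ha hij) hij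
  rw [← hu] at this
  exact Nat.cast_le.1 this

theorem exists_nonneg_sum_smul_vSeq_eq {d : ℕ} {a b : Fin d → ℕ} (ha : Antitone a)
    (ha_pos : 0 < ∑ i, a i) (hb : Antitone b)
    (hcone : ∀ n : Fin d,
      (∑ i, a i) * (∑ i ∈ Iic n, b i) ≤ (∑ i, b i) * (∑ i ∈ Iic n, a i)) :
    ∃ r : Composition d → ℚ, 0 ≤ r ∧
      ∑ L, r L • vSeq L (fun j => (lcmUpTo d * a j : ℚ)) = fun i => (b i : ℚ) := by
  have hA : (0 : ℚ) < ∑ i, (a i : ℚ) := by exact_mod_cast ha_pos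
  have hμ : (lcmUpTo d : ℚ) ≠ 0 := by have := lcmUpTo_pos d; positivity
  set κ : ℚ := (∑ i, (b i : ℚ)) / ((∑ i, (a i : ℚ)) * lcmUpTo d)
  have hy : κ • (fun j => (lcmUpTo d * a j : ℚ)) =
      ((∑ i, (b i : ℚ)) / ∑ i, (a i : ℚ)) • fun j => (a j : ℚ) := by
    ext j
    simp only [Pi.smul_apply, smul_eq_mul, κ]
    field_simp
  have hmaj := mem_convexHull_range_vSeq (x := fun i => (b i : ℚ))
    (y := κ • fun j => (lcmUpTo d * a j : ℚ)) ?_ (fun i j hij => Nat.cast_le.2 (hb hij)) ?_ ?_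
  · simp_rw [vSeq_smul] at hmaj
    obtain ⟨t, ht, hsum⟩ := exists_nonneg_sum_smul_eq_of_mem_convexHull_range hmaj
    refine ⟨κ • t, smul_nonneg (by positivity) ht, ?_⟩
    simpa [smul_smul, mul_comm] using hsum
  · rw [hy]
    exact fun i j hij => mul_le_mul_of_nonneg_left (Nat.cast_le.2 (ha hij)) (by positivity)
  · intro p
    rw [hy, map_smul, smul_eq_mul]
    induction p using Fin.cases with
    | zero => simp
    | succ n =>
      rw [partialSum_succ, partialSum_succ, div_mul_eq_mul_div, le_div_iff₀ hA, mul_comm]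
      exact_mod_cast hcone n
  · simp only [κ, Pi.smul_apply, smul_eq_mul, ← mul_sum]
    field_simp

theorem finite_decomposition_in_cone_general (d : ℕ) (a : Fin d → ℕ)
    (ha_mono : Antitone a) (ha_pos : 0 < ∑ i, a i) :
    ∃ σ : Finset (Fin d → ℕ), (∀ c ∈ σ, Antitone c) ∧
      ∀ b : Fin d → ℕ, Antitone b →
        (∀ n : Fin d,
          (∑ i, a i) * (∑ i ∈ Finset.Iic n, b i) ≤ (∑ i, b i) * (∑ i ∈ Finset.Iic n, a i)) →
        ∃ c ∈ σ, ∃ m : Composition d → ℕ,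
          (fun i => (b i : ℚ)) = (fun i => (c i : ℚ)) +
            ∑ L : Composition d, (m L : ℚ) • vSeq L (fun j => (lcmUpTo d * a j : ℚ)) := by
  classical
  choose u hu_anti hu using fun L : Composition d => exists_antitone_natCast_eq_vSeq L ha_mono
  refine ⟨{c ∈ Iic (∑ L, u L) | Antitone c}, fun c hc => (mem_filter.1 hc).2,
    fun b hb hcone => ?_⟩
  obtain ⟨r, hr, hbr⟩ := exists_nonneg_sum_smul_vSeq_eq ha_mono ha_pos hb hcone
  simp only [← hu] at hbr
  obtain ⟨c, hc, hc_le, m, hbc⟩ := exists_antitone_le_sum_add_sum_nat_smul hu_anti hr hbr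
  exact ⟨c, mem_filter.2 ⟨mem_Iic.2 hc_le, hc⟩, m, by simpa only [← hu] using hbc⟩

/-- There is a finite set `σ(a)` of partitions of length `d` such that every partition
`b` lying in the cone `C(a)` can be written as `b = c + ∑_L m_L • v(L, μ(d)·a)` with
`c ∈ σ(a)` and nonnegative integers `m_L`, the sum running over all compositions `L` of `d`. -/
theorem finite_decomposition_in_cone (d : ℕ) (hd : 1 ≤ d) (a : Fin d → ℕ)
    (ha_mono : Antitone a) (ha_pos : 0 < ∑ i, a i) :
    ∃ σ : Finset (Fin d → ℕ), (∀ c ∈ σ, Antitone c) ∧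
      ∀ b : Fin d → ℕ, Antitone b →
        (∀ n : Fin d,
          (∑ i, a i) * (∑ i ∈ Finset.Iic n, b i) ≤ (∑ i, b i) * (∑ i ∈ Finset.Iic n, a i)) →
        ∃ c ∈ σ, ∃ m : Composition d → ℕ,
          (fun i => (b i : ℚ)) = (fun i => (c i : ℚ)) +
            ∑ L : Composition d, (m L : ℚ) • vSeq L (fun j => (lcmUpTo d * a j : ℚ)) :=
  finite_decomposition_in_cone_general d a ha_mono ha_pos
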